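/- The zigzag poset Z is not expressible. -/

import Mathlib

open scoped NNReal

/-- The join of two posets: underlying set the disjoint union, with every
element of the first below every element of the second. -/
def Join (α β : Type) : Type := α ⊕ β

/-- Package a sum element as an element of the join. -/
def Join.mk {α β : Type} : α ⊕ β → Join α β := id

/-- Unpack an element of the join. -/
def Join.out {α β : Type} : Join α β → α ⊕ β := id

/-- The order relation of the join. -/
def joinLE {α β : Type} [LE α] [LE β] : α ⊕ β → α ⊕ β → Prop
  | .inl a, .inl a' => a ≤ a'
  | .inr b, .inr b' => b ≤ b'
  | .inl _, .inr _ => True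
  | .inr _, .inl _ => False

instance Join.instPartialOrder {α β : Type} [PartialOrder α] [PartialOrder β] :
    PartialOrder (Join α β) where
  le x y := joinLE (Join.out x) (Join.out y)
  le_refl x := by rcases hx : Join.out x with a | b <;> simp [hx, joinLE]
  le_trans x y z hxy hyz := by
    rcases hx : Join.out x with a | a <;> rcases hy : Join.out y with b | b <;>
      rcases hz : Join.out z with c | c <;>
      simp_all [joinLE] <;> exact le_trans hxy hyz
  le_antisymm x y hxy hyx := by
    have : Join.out x = Join.out y := by
      rcases hx : Join.out x with a | a <;> rcases hy : Join.out y with b | b <;>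
        simp_all [joinLE] <;> exact le_antisymm hxy hyx
    exact this

/-- The disjoint-union partial order on a sum type (no cross relations). -/
def disjOrder (α β : Type) [PartialOrder α] [PartialOrder β] : PartialOrder (α ⊕ β) :=
  inferInstance

/-- The class of expressible posets: generated from empty and singleton posets by
disjoint unions and joins, closed under order isomorphism. -/
inductive Expressible : ∀ (α : Type), PartialOrder α → Prop
  | empty (α : Type) [IsEmpty α] (o : PartialOrder α) : Expressible α o
  | single (α : Type) [Unique α] (o : PartialOrder α) : Expressible α o
  | disj {α β : Type} [oa : PartialOrder α] [ob : PartialOrder β] :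
      Expressible α oa → Expressible β ob → Expressible (α ⊕ β) (disjOrder α β)
  | join {α β : Type} [oa : PartialOrder α] [ob : PartialOrder β] :
      Expressible α oa → Expressible β ob → Expressible (Join α β) Join.instPartialOrder
  | iso {α β : Type} (oa : PartialOrder α) (ob : PartialOrder β) (e : α ≃ β)
      (he : ∀ x y, oa.le x y ↔ ob.le (e x) (e y)) :
      Expressible α oa → Expressible β ob

/-- The order relation of the zigzag poset `Z` on four elements `0,1,2,3`
(thought of as `a,b,c,d`): exactly `a < b`, `c < b`, `c < d`. -/
abbrev ZLE : Fin 4 → Fin 4 → Prop := fun x y =>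
  x = y ∨ (x = 0 ∧ y = 1) ∨ (x = 2 ∧ y = 1) ∨ (x = 2 ∧ y = 3)

theorem ZLE.refl : ∀ a, ZLE a a := by decide
theorem ZLE.trans : ∀ a b c, ZLE a b → ZLE b c → ZLE a c := by decide
theorem ZLE.antisymm : ∀ a b, ZLE a b → ZLE b a → a = b := by decide

/-- The zigzag poset `Z`. -/
def ZOrder : PartialOrder (Fin 4) where
  le := ZLE
  lt a b := ZLE a b ∧ ¬ ZLE b a
  lt_iff_le_not_ge _ _ := Iff.rfl
  le_refl := ZLE.refl
  le_trans := ZLE.trans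
  le_antisymm := ZLE.antisymm

/-- A poset admits no full embedding of the zigzag `Z`: there is no injective map
from `Z` that both preserves and reflects the order. -/
def NoZFullEmbedding (α : Type) [PartialOrder α] : Prop :=
  ¬ ∃ f : Fin 4 → α, Function.Injective f ∧ ∀ x y : Fin 4, ZLE x y ↔ f x ≤ f y

/-- Lexicographic substitution of the posets `Q i` into the poset `P`. -/
def SubstOrder {ι : Type} (P : PartialOrder ι) {β : ι → Type}
    (Q : ∀ i, PartialOrder (β i)) : PartialOrder (Σ i, β i) :=
  letI := P
  letI : ∀ i, PartialOrder (β i) := Q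
  inferInstanceAs (PartialOrder (Σₗ i, β i))

/-- The tropical dependence operation: maximal chain-sum of weights over a poset. -/
noncomputable def tropBox {ι : Type} (P : PartialOrder ι) (a : ι → ℝ≥0) : ℝ≥0 :=
  sSup {s : ℝ≥0 | ∃ l : List ι, l.Chain' (fun i j => P.lt i j) ∧ s = (l.map a).sum}

/-- The discrete partial order. -/
def discreteOrder (ι : Type) : PartialOrder ι where
  le x y := x = y
  le_refl _ := rfl
  le_trans _ _ _ h h' := Eq.trans h h'
  le_antisymm _ _ h _ := h

/-- Connectivity of a poset: any two elements are joined by a zigzag of comparisons. -/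
def PosetConnected (α : Type) [PartialOrder α] : Prop :=
  ∀ x y : α, Relation.ReflTransGen (fun u v : α => u ≤ v ∨ v ≤ u) x y


/-!
Being expressible is witnessed by a construction tree, so it suffices to find a property of posets
that holds for singletons and is stable under isomorphism, disjoint union and join, but fails for
`Z`: containing no induced copy of `Z`. An induced copy of `Z` in a disjoint union lies in one
summand because the comparability graph of `Z` (the path `a - b - c - d`) is connected, and an
induced copy in a join lies in one side because its incomparability graph (`c - a - d - b`) is
connected.
-/

theorem Sum.isLeft_eq_of_le {α β : Type} [LE α] [LE β] {x y : α ⊕ β} (h : x ≤ y) :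
    x.isLeft = y.isLeft := by
  cases h <;> rfl

theorem Sum.forall_mem_range_inl_or_inr {ι α β : Type} {f : ι → α ⊕ β} (i₀ : ι)
    (h : ∀ i, (f i).isLeft = (f i₀).isLeft) :
    (∀ i, f i ∈ Set.range Sum.inl) ∨ ∀ i, f i ∈ Set.range Sum.inr := by
  cases h₀ : (f i₀).isLeft
  · exact .inr fun i => (isRight_iff.1 (isLeft_eq_false.1 ((h i).trans h₀))).imp fun _ => Eq.symm
  · exact .inl fun i => (isLeft_iff.1 ((h i).trans h₀)).imp fun _ => Eq.symm

namespace Join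

variable {α β : Type} [PartialOrder α] [PartialOrder β]

def inlEmbedding : α ↪o Join α β :=
  OrderEmbedding.ofMapLEIff (fun a => Join.mk (.inl a)) fun _ _ => Iff.rfl

def inrEmbedding : β ↪o Join α β :=
  OrderEmbedding.ofMapLEIff (fun b => Join.mk (.inr b)) fun _ _ => Iff.rfl

theorem le_or_le_of_isLeft_ne {x y : Join α β} (h : x.out.isLeft ≠ y.out.isLeft) :
    x ≤ y ∨ y ≤ x := by
  change joinLE x.out y.out ∨ joinLE y.out x.out
  revert h
  cases x.out <;> cases y.out <;> simp [joinLE]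

end Join

section ZFullEmbedding

variable {α β : Type} [PartialOrder α] [PartialOrder β]

def IsZFullEmbedding (f : Fin 4 → α) : Prop :=
  Function.Injective f ∧ ∀ x y : Fin 4, ZLE x y ↔ f x ≤ f y

theorem isZFullEmbedding_comp_iff (g : α ↪o β) {f : Fin 4 → α} :
    IsZFullEmbedding (g ∘ f) ↔ IsZFullEmbedding f := by
  simp only [IsZFullEmbedding, Function.comp_apply, g.le_iff_le]
  exact and_congr_left fun _ => g.injective.of_comp_iff f

theorem NoZFullEmbedding.of_orderEmbedding (g : α ↪o β) (h : NoZFullEmbedding β) :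
    NoZFullEmbedding α :=
  fun ⟨f, hf⟩ => h ⟨g ∘ f, (isZFullEmbedding_comp_iff g).2 hf⟩

theorem NoZFullEmbedding.of_forall_mem_range (g : α ↪o β) (h : NoZFullEmbedding α)
    {f : Fin 4 → β} (hf : IsZFullEmbedding f) : ¬ ∀ i, f i ∈ Set.range g := by
  intro hrange
  choose f' hf' using hrange
  have hcomp : g ∘ f' = f := funext hf'
  exact h ⟨f', (isZFullEmbedding_comp_iff g).1 (hcomp ▸ hf)⟩

theorem noZFullEmbedding_of_subsingleton [Subsingleton α] : NoZFullEmbedding α :=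
  fun ⟨_, hinj, _⟩ => absurd (hinj (Subsingleton.elim _ _)) (by decide : (0 : Fin 4) ≠ 1)

theorem NoZFullEmbedding.sum (hα : NoZFullEmbedding α) (hβ : NoZFullEmbedding β) :
    NoZFullEmbedding (α ⊕ β) := by
  rintro ⟨f, hf⟩
  have side : ∀ x y, ZLE x y → (f x).isLeft = (f y).isLeft :=
    fun x y hxy => Sum.isLeft_eq_of_le ((hf.2 x y).1 hxy)
  have hconst : ∀ i, (f i).isLeft = (f 0).isLeft := by
    have h01 := side 0 1 (by decide)
    have h21 := side 2 1 (by decide)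
    have h23 := side 2 3 (by decide)
    intro i; fin_cases i <;> simp_all
  rcases Sum.forall_mem_range_inl_or_inr 0 hconst with hinl | hinr
  · exact hα.of_forall_mem_range (.ofMapLEIff Sum.inl fun _ _ => Sum.inl_le_inl_iff) hf hinl
  · exact hβ.of_forall_mem_range (.ofMapLEIff Sum.inr fun _ _ => Sum.inr_le_inr_iff) hf hinr

theorem NoZFullEmbedding.join (hα : NoZFullEmbedding α) (hβ : NoZFullEmbedding β) :
    NoZFullEmbedding (Join α β) := by
  rintro ⟨f, hf⟩
  have side : ∀ x y, ¬ ZLE x y → ¬ ZLE y x → (f x).out.isLeft = (f y).out.isLeft := by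
    intro x y hxy hyx
    by_contra hne
    rcases Join.le_or_le_of_isLeft_ne hne with h | h
    exacts [hxy ((hf.2 x y).2 h), hyx ((hf.2 y x).2 h)]
  have hconst : ∀ i, (f i).out.isLeft = (f 0).out.isLeft := by
    have h02 := side 0 2 (by decide) (by decide)
    have h03 := side 0 3 (by decide) (by decide)
    have h13 := side 1 3 (by decide) (by decide)
    intro i; fin_cases i <;> simp_all
  rcases Sum.forall_mem_range_inl_or_inr (f := Join.out ∘ f) 0 hconst with hinl | hinr
  · exact hα.of_forall_mem_range Join.inlEmbedding hf hinl
  · exact hβ.of_forall_mem_range Join.inrEmbedding hf hinr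

end ZFullEmbedding

theorem Expressible.noZFullEmbedding {α : Type} {o : PartialOrder α} (h : Expressible α o) :
    @NoZFullEmbedding α o := by
  induction h with
  | empty => exact noZFullEmbedding_of_subsingleton
  | single => exact noZFullEmbedding_of_subsingleton
  | disj _ _ hα hβ => exact hα.sum hβ
  | join _ _ hα hβ => exact hα.join hβ
  | iso oa ob e he _ hα =>
    let _ := oa; let _ := ob
    exact hα.of_orderEmbedding (OrderIso.symm ⟨e, (he _ _).symm⟩).toOrderEmbedding

/-- The zigzag poset `Z` is not expressible. -/
theorem Z_not_expressible : ¬ Expressible (Fin 4) ZOrder :=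
  fun h => h.noZFullEmbedding ⟨id, Function.injective_id, fun _ _ => Iff.rfl⟩
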